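/- arXiv:2305.12756 — 5 statements merged into one kernel-verified Lean document; each statement's English description precedes it below -/
import Mathlib

section
/- Consider the cooperative game on N = {g, u_1, ..., u_n} with ν(S) = 0 if g ∉ S and ν(S) = ρ·|S \ {g}|² if g ∈ S (Metcalfe value, k = 2), where ρ > 0. Then the founder's Shapley value is exactly φ_g(ν) = ρ·n(2n+1)/6, and consequently φ_g(ν)/ν(N) → 1/3 as n → ∞. -/
/-!
Only the marginal contribution of the founder matters: it is `ρ k²` when she joins a coalition of
`k` users and `0` otherwise. The Shapley weights of all coalitions of a given size sum to
`1 / |N|`, so `φ_g` is the average of `ρ k²` over `k = 0, …, n`, namely `ρ n (2n + 1) / 6`,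
while `ν(N) = ρ n²`.
-/

open Finset Filter Topology

/-- The Shapley value of player `i` in the cooperative game with player set `N`
and value function `ν`. -/
noncomputable def shapley {α : Type*} [DecidableEq α] (N : Finset α) (ν : Finset α → ℝ)
    (i : α) : ℝ :=
  ∑ S ∈ (N.erase i).powerset,
    (((S.card.factorial : ℝ) * ((N.card - S.card - 1).factorial : ℝ)) / (N.card.factorial : ℝ)) *
      (ν (insert i S) - ν S)

theorem six_mul_sum_range_succ_sq {R : Type*} [CommRing R] (n : ℕ) :
    6 * ∑ k ∈ range (n + 1), (k : R) ^ 2 = n * (n + 1) * (2 * n + 1) := by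
  induction n with
  | zero => simp
  | succ n ih =>
    rw [sum_range_succ, mul_add, ih]
    push_cast
    ring

theorem choose_mul_factorial_mul_factorial_div_factorial_succ {n k : ℕ} (hk : k ≤ n) :
    (n.choose k : ℝ) * ((k.factorial : ℝ) * ((n - k).factorial : ℝ) / ((n + 1).factorial : ℝ)) =
      1 / (n + 1) := by
  have hchoose : (n.choose k : ℝ) * k.factorial * (n - k).factorial = n.factorial := by
    exact_mod_cast Nat.choose_mul_factorial_mul_factorial hk
  rw [Nat.factorial_succ, Nat.cast_mul, ← mul_div_assoc, ← mul_assoc, hchoose]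
  have : (n.factorial : ℝ) ≠ 0 := by positivity
  field_simp
  push_cast
  ring

theorem shapley_eq_sum_div_card {α : Type*} [DecidableEq α] {N : Finset α} {i : α} (hi : i ∈ N)
    (ν : Finset α → ℝ) (f : ℕ → ℝ)
    (hf : ∀ S ⊆ N.erase i, ν (insert i S) - ν S = f S.card) :
    shapley N ν i = (∑ k ∈ range N.card, f k) / N.card := by
  obtain ⟨n, hn⟩ : ∃ n, (N.erase i).card = n := ⟨_, rfl⟩
  have hN : N.card = n + 1 := by rw [← hn, card_erase_add_one hi]
  calc shapley N ν i
      = ∑ S ∈ (N.erase i).powerset, (S.card.factorial * (n - S.card).factorial /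
          (n + 1).factorial : ℝ) * f S.card := by
        refine sum_congr rfl fun S hS => ?_
        rw [hf S (mem_powerset.mp hS), hN, Nat.sub_right_comm, Nat.add_sub_cancel]
    _ = ∑ k ∈ range (n + 1), n.choose k • ((k.factorial * (n - k).factorial /
          (n + 1).factorial : ℝ) * f k) := by
        rw [sum_powerset_apply_card (fun k => (k.factorial * (n - k).factorial /
          (n + 1).factorial : ℝ) * f k), hn]
    _ = ∑ k ∈ range (n + 1), f k / (n + 1) := by
        refine sum_congr rfl fun k hk => ?_
        rw [nsmul_eq_mul, ← mul_assoc, choose_mul_factorial_mul_factorial_div_factorial_succ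
          (Nat.lt_succ_iff.mp (mem_range.mp hk))]
        ring
    _ = (∑ k ∈ range N.card, f k) / N.card := by
        rw [← sum_div, hN]
        push_cast
        rfl

theorem tendsto_mul_two_mul_add_one_div_six_div_sq :
    Tendsto (fun n : ℕ => ((n : ℝ) * (2 * n + 1) / 6) / (n : ℝ) ^ 2) atTop (𝓝 (1 / 3)) := by
  have hlim : Tendsto (fun n : ℕ => 1 / 3 + (n : ℝ)⁻¹ / 6) atTop (𝓝 (1 / 3)) := by
    simpa using tendsto_const_nhds.add ((tendsto_inv_atTop_nhds_zero_nat (𝕜 := ℝ)).div_const 6)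
  refine hlim.congr' ?_
  filter_upwards [eventually_ne_atTop 0] with n hn
  field_simp
  ring

theorem stmt_3 (ρ : ℝ) (hρ : 0 < ρ)
    (ν : ∀ n : ℕ, Finset (Option (Fin n)) → ℝ)
    (hν : ∀ n S, ν n S = if none ∈ S then ρ * ((S.erase none).card : ℝ) ^ 2 else 0) :
    (∀ n : ℕ, shapley Finset.univ (ν n) none = ρ * (n * (2 * n + 1)) / 6) ∧
    Filter.Tendsto (fun n : ℕ => shapley Finset.univ (ν n) none / ν n Finset.univ)
      Filter.atTop (nhds (1 / 3)) := by
  have hφ (n : ℕ) : shapley Finset.univ (ν n) none = ρ * (n * (2 * n + 1)) / 6 := by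
    have hmarginal : ∀ S ⊆ Finset.univ.erase none,
        ν n (insert none S) - ν n S = ρ * (S.card : ℝ) ^ 2 := fun S hS => by
      have hnone : none ∉ S := fun h => (mem_erase.mp (hS h)).1 rfl
      simp [hν, hnone, erase_insert hnone]
    rw [shapley_eq_sum_div_card (mem_univ _) _ (fun k => ρ * (k : ℝ) ^ 2) hmarginal, ← mul_sum]
    have hsq := six_mul_sum_range_succ_sq (R := ℝ) n
    simp only [card_univ, Fintype.card_option, Fintype.card_fin, Nat.cast_add, Nat.cast_one]
    rw [div_eq_iff (by positivity)]
    linear_combination ρ / 6 * hsq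
  have hgrand (n : ℕ) : ν n Finset.univ = ρ * (n : ℝ) ^ 2 := by
    simp [hν]
  refine ⟨hφ, ?_⟩
  have hratio (n : ℕ) : shapley Finset.univ (ν n) none / ν n Finset.univ =
      ((n : ℝ) * (2 * n + 1) / 6) / (n : ℝ) ^ 2 := by
    rw [hφ, hgrand, mul_div_assoc, mul_div_mul_left _ _ hρ.ne']
  simpa only [hratio] using tendsto_mul_two_mul_add_one_div_six_div_sq
end

section
/- For every natural number k ≥ 1 and real ρ > 0, in the cooperative game on N = {g, u_1, ..., u_n} with ν(S) = 0 if g ∉ S and ν(S) = ρ·|S \ {g}|^k otherwise, the founder's Shapley value φ_g(ν) = (ρ/(n+1)) ∑_{s=0}^{n} s^k satisfies lim_{n→∞} φ_g(ν)/ν(N) = 1/(k+1), and the total crowd share satisfies lim_{n→∞} (∑_{i=1}^n φ_{u_i}(ν))/ν(N) = k/(k+1). -/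
/-!
The founder is a veto player whose marginal contribution to a coalition of `s` crowd members is
`ρ s^k`; since the Shapley weights of all coalitions of a given size sum to `1/(n+1)`, the founder
receives the average `(ρ/(n+1)) ∑_{s ≤ n} s^k`. Comparing this power sum with `∫₀ⁿ x^k dx` gives
`n^{k+1}/(k+1) ≤ ∑_{s ≤ n} s^k ≤ n^{k+1}/(k+1) + n^k`, so the founder's share of `ν(N) = ρ n^k`
tends to `1/(k+1)`. By efficiency the crowd receives the rest, `k/(k+1)` in the limit.
-/

open Finset Filter Topology

open scoped Nat

namespace Finset

variable {α M : Type*} [DecidableEq α] [AddCommMonoid M]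

theorem sum_sum_powerset_erase (N : Finset α) (g : Finset α → M) :
    ∑ i ∈ N, ∑ S ∈ (N.erase i).powerset, g S = ∑ S ∈ N.powerset, (#N - #S) • g S := by
  rw [sum_comm' (t' := N.powerset) (s' := fun S => N \ S)]
  · refine sum_congr rfl fun S hS => ?_
    rw [sum_const, card_sdiff_of_subset (mem_powerset.1 hS)]
  · intro i S
    simp only [mem_powerset, subset_erase, mem_sdiff]
    tauto

theorem sum_sum_powerset_erase_insert (N : Finset α) (g : ℕ → Finset α → M) :
    ∑ i ∈ N, ∑ S ∈ (N.erase i).powerset, g #S (insert i S) =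
      ∑ T ∈ N.powerset, #T • g (#T - 1) T := by
  have reindex (i : α) (hi : i ∈ N) : ∑ S ∈ (N.erase i).powerset, g #S (insert i S) =
      ∑ T ∈ N.powerset with i ∈ T, g (#T - 1) T := by
    refine sum_nbij' (insert i) (erase · i) ?_ ?_ ?_ ?_ ?_ <;> intro S hS <;>
      simp only [mem_powerset, subset_erase, mem_filter] at hS ⊢
    · exact ⟨insert_subset hi hS.1, mem_insert_self i S⟩
    · exact ⟨(erase_subset i S).trans hS.1, notMem_erase i S⟩
    · exact erase_insert hS.2
    · exact insert_erase hS.2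
    · rw [card_insert_of_notMem hS.2, Nat.add_sub_cancel]
  rw [sum_congr rfl reindex, sum_comm' (t' := N.powerset) (s' := fun T => T)]
  · simp_rw [sum_const]
  · intro i T
    simp only [mem_powerset, mem_filter]
    exact ⟨fun ⟨_, hT, hiT⟩ => ⟨hiT, hT⟩, fun ⟨hiT, hT⟩ => ⟨hT hiT, hT, hiT⟩⟩

end Finset

noncomputable def shapleyWeight (n s : ℕ) : ℝ := s ! * (n - s - 1)! / n !

theorem shapley_eq_sum_shapleyWeight {α : Type*} [DecidableEq α] (N : Finset α)
    (ν : Finset α → ℝ) (i : α) :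
    shapley N ν i = ∑ S ∈ (N.erase i).powerset, shapleyWeight #N #S * (ν (insert i S) - ν S) :=
  rfl

theorem natCast_mul_shapleyWeight_pred {n t : ℕ} (ht : t ≤ n) :
    t * shapleyWeight n (t - 1) = t ! * (n - t)! / (n ! : ℝ) - if t = 0 then 1 else 0 := by
  rcases t with _ | t
  · simp [Nat.factorial_ne_zero]
  · rw [if_neg t.succ_ne_zero, sub_zero, shapleyWeight, Nat.add_sub_cancel,
      show n - t - 1 = n - (t + 1) by omega, Nat.factorial_succ]
    push_cast
    ring

theorem natCast_sub_mul_shapleyWeight {n t : ℕ} (ht : t ≤ n) :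
    ((n - t : ℕ) : ℝ) * shapleyWeight n t = t ! * (n - t)! / (n ! : ℝ) - if t = n then 1 else 0 := by
  obtain rfl | ht := ht.eq_or_lt
  · simp [Nat.factorial_ne_zero]
  · rw [if_neg ht.ne, sub_zero, shapleyWeight, show n - t = (n - t - 1) + 1 by omega,
      Nat.factorial_succ]
    push_cast
    ring

theorem choose_mul_shapleyWeight {n s : ℕ} (hs : s ≤ n) :
    n.choose s * shapleyWeight (n + 1) s = 1 / (n + 1) := by
  have h := Nat.choose_mul_factorial_mul_factorial hs
  rw [shapleyWeight, show n + 1 - s - 1 = n - s by omega, Nat.factorial_succ, ← h]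
  have : (n.choose s : ℝ) ≠ 0 := by exact_mod_cast (Nat.choose_pos hs).ne'
  push_cast
  field_simp

section Shapley

variable {α : Type*} [DecidableEq α]

theorem sum_shapley (N : Finset α) (ν : Finset α → ℝ) : ∑ i ∈ N, shapley N ν i = ν N - ν ∅ := by
  simp only [shapley_eq_sum_shapleyWeight, mul_sub, sum_sub_distrib]
  rw [sum_sum_powerset_erase_insert N (fun s T => shapleyWeight #N s * ν T),
    sum_sum_powerset_erase N (fun S => shapleyWeight #N #S * ν S), ← sum_sub_distrib]
  -- Both counts give `ν T` the weight `|T|!(n-|T|)!/n!`, except that `T = ∅` is missing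
  -- from the first and `T = N` from the second.
  calc _ = ∑ T ∈ N.powerset, ((if T = N then ν T else 0) - if T = ∅ then ν T else 0) := by
        refine sum_congr rfl fun T hT => ?_
        have hTN : #T ≤ #N := card_le_card (mem_powerset.1 hT)
        have hcard : #T = #N ↔ T = N :=
          ⟨fun h => eq_of_subset_of_card_le (mem_powerset.1 hT) h.ge, congrArg card⟩
        simp only [nsmul_eq_mul, ← mul_assoc]
        rw [natCast_mul_shapleyWeight_pred hTN, natCast_sub_mul_shapleyWeight hTN]
        simp only [Finset.card_eq_zero, hcard]
        split_ifs <;> ring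
    _ = ν N - ν ∅ := by
        rw [sum_sub_distrib, sum_ite_eq', sum_ite_eq']
        simp

variable {N : Finset α} {ν : Finset α → ℝ}

theorem shapley_eq_of_marginal_eq {i : α} (hi : i ∈ N) (f : ℕ → ℝ)
    (hf : ∀ S ⊆ N.erase i, ν (insert i S) - ν S = f #S) :
    shapley N ν i = (∑ s ∈ range #N, f s) / #N := by
  obtain ⟨n, hn⟩ : ∃ n, #N = n + 1 := Nat.exists_eq_succ_of_ne_zero (card_ne_zero_of_mem hi)
  have herase : #(N.erase i) = n := by rw [card_erase_of_mem hi, hn, Nat.add_sub_cancel]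
  calc shapley N ν i = ∑ S ∈ (N.erase i).powerset, shapleyWeight #N #S * f #S := by
        rw [shapley_eq_sum_shapleyWeight]
        exact sum_congr rfl fun S hS => by rw [hf S (mem_powerset.1 hS)]
    _ = ∑ s ∈ range (n + 1), n.choose s * shapleyWeight (n + 1) s * f s := by
        rw [sum_powerset_apply_card (fun s => shapleyWeight #N s * f s), herase, hn]
        simp only [nsmul_eq_mul, mul_assoc]
    _ = (∑ s ∈ range #N, f s) / #N := by
        rw [hn, sum_div]
        refine sum_congr rfl fun s hs => ?_
        rw [choose_mul_shapleyWeight (Nat.lt_succ_iff.1 (mem_range.1 hs))]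
        push_cast
        ring

theorem shapley_of_eq_ite_mem {g : α} (hg : g ∈ N) {f : ℕ → ℝ}
    (hν : ∀ S, ν S = if g ∈ S then f #(S.erase g) else 0) :
    shapley N ν g = (∑ s ∈ range #N, f s) / #N := by
  refine shapley_eq_of_marginal_eq hg f fun S hS => ?_
  have hgS : g ∉ S := fun h => (mem_erase.1 (hS h)).1 rfl
  rw [hν, hν, if_pos (mem_insert_self g S), if_neg hgS, erase_insert hgS, sub_zero]

end Shapley

theorem sum_range_pow_le (k n : ℕ) : ∑ s ∈ range n, (s : ℝ) ^ k ≤ (n : ℝ) ^ (k + 1) / (k + 1) := by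
  have hmono : MonotoneOn (fun x : ℝ => x ^ k) (Set.Icc 0 (0 + n)) :=
    fun x hx y _ hxy => pow_le_pow_left₀ hx.1 hxy k
  simpa [integral_pow] using hmono.sum_le_integral

theorem pow_succ_div_le_sum_range_pow (k n : ℕ) :
    (n : ℝ) ^ (k + 1) / (k + 1) ≤ ∑ s ∈ range (n + 1), (s : ℝ) ^ k := by
  have hmono : MonotoneOn (fun x : ℝ => x ^ k) (Set.Icc 0 (0 + n)) :=
    fun x hx y _ hxy => pow_le_pow_left₀ hx.1 hxy k
  have h := hmono.integral_le_sum
  simp [integral_pow] at h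
  rw [sum_range_succ']
  push_cast
  linarith [pow_nonneg (le_refl (0 : ℝ)) k]

theorem tendsto_sum_range_pow_div (k : ℕ) :
    Tendsto (fun n : ℕ => (∑ s ∈ range (n + 1), (s : ℝ) ^ k) / ((n + 1) * n ^ k)) atTop
      (𝓝 (1 / (k + 1))) := by
  have hlower : Tendsto (fun n : ℕ => (n : ℝ) / (n + 1) * (1 / (k + 1))) atTop
      (𝓝 (1 / (k + 1))) := by
    simpa using (tendsto_natCast_div_add_atTop (1 : ℝ)).mul_const (1 / ((k : ℝ) + 1))
  have hupper := hlower.add tendsto_one_div_add_atTop_nhds_zero_nat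
  rw [add_zero] at hupper
  refine tendsto_of_tendsto_of_tendsto_of_le_of_le' hlower hupper ?_ ?_
  all_goals filter_upwards [eventually_gt_atTop 0] with n hn
  all_goals have hpos : (0 : ℝ) < (n + 1) * n ^ k := by positivity
  · rw [le_div_iff₀ hpos]
    calc (n : ℝ) / (n + 1) * (1 / (k + 1)) * ((n + 1) * n ^ k) = (n : ℝ) ^ (k + 1) / (k + 1) := by
          field_simp; ring
      _ ≤ _ := pow_succ_div_le_sum_range_pow k n
  · rw [div_le_iff₀ hpos, sum_range_succ]
    calc _ ≤ (n : ℝ) ^ (k + 1) / (k + 1) + n ^ k := by grw [sum_range_pow_le]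
      _ = _ := by field_simp; ring

theorem stmt_4_general (k : ℕ) (ρ : ℝ) (hρ : 0 < ρ)
    (ν : ∀ n : ℕ, Finset (Option (Fin n)) → ℝ)
    (hν : ∀ n S, ν n S = if none ∈ S then ρ * ((S.erase none).card : ℝ) ^ k else 0) :
    (∀ n : ℕ, shapley Finset.univ (ν n) none =
      (ρ / (n + 1 : ℝ)) * ∑ s ∈ Finset.range (n + 1), (s : ℝ) ^ k) ∧
    Filter.Tendsto (fun n : ℕ => shapley Finset.univ (ν n) none / ν n Finset.univ)
      Filter.atTop (nhds (1 / (k + 1 : ℝ))) ∧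
    Filter.Tendsto
      (fun n : ℕ => (∑ i : Fin n, shapley Finset.univ (ν n) (some i)) / ν n Finset.univ)
      Filter.atTop (nhds ((k : ℝ) / (k + 1 : ℝ))) := by
  have hνN (n : ℕ) : ν n univ = ρ * n ^ k := by simp [hν]
  have hfounder (n : ℕ) :
      shapley univ (ν n) none = ρ / (n + 1) * ∑ s ∈ range (n + 1), (s : ℝ) ^ k := by
    rw [shapley_of_eq_ite_mem (mem_univ none) (f := fun s => ρ * (s : ℝ) ^ k) (hν n), card_univ, Fintype.card_option,
      Fintype.card_fin, ← mul_sum]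
    push_cast
    ring
  have hcrowd (n : ℕ) :
      ∑ i : Fin n, shapley univ (ν n) (some i) = ν n univ - shapley univ (ν n) none := by
    have h := sum_shapley (univ : Finset (Option (Fin n))) (ν n)
    rw [Fintype.sum_option, hν n ∅, if_neg (notMem_empty none), sub_zero] at h
    linarith
  have hratio : Tendsto (fun n : ℕ => shapley univ (ν n) none / ν n univ) atTop
      (𝓝 (1 / (k + 1))) := by
    refine (tendsto_sum_range_pow_div k).congr' ?_
    filter_upwards [eventually_gt_atTop 0] with n hn
    rw [hfounder, hνN]
    field_simp
  refine ⟨hfounder, hratio, ?_⟩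
  rw [show (k : ℝ) / (k + 1) = 1 - 1 / (k + 1) by field_simp; ring]
  refine (tendsto_const_nhds.sub hratio).congr' ?_
  filter_upwards [eventually_gt_atTop 0] with n hn
  have hνN_pos : 0 < ν n univ := by rw [hνN]; positivity
  rw [hcrowd, sub_div, div_self hνN_pos.ne']

theorem stmt_4 (k : ℕ) (hk : 1 ≤ k) (ρ : ℝ) (hρ : 0 < ρ)
    (ν : ∀ n : ℕ, Finset (Option (Fin n)) → ℝ)
    (hν : ∀ n S, ν n S = if none ∈ S then ρ * ((S.erase none).card : ℝ) ^ k else 0) :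
    (∀ n : ℕ, shapley Finset.univ (ν n) none =
      (ρ / (n + 1 : ℝ)) * ∑ s ∈ Finset.range (n + 1), (s : ℝ) ^ k) ∧
    Filter.Tendsto (fun n : ℕ => shapley Finset.univ (ν n) none / ν n Finset.univ)
      Filter.atTop (nhds (1 / (k + 1 : ℝ))) ∧
    Filter.Tendsto
      (fun n : ℕ => (∑ i : Fin n, shapley Finset.univ (ν n) (some i)) / ν n Finset.univ)
      Filter.atTop (nhds ((k : ℝ) / (k + 1 : ℝ))) :=
  stmt_4_general k ρ hρ ν hν
end

section
/- Consider the cooperative game on N = {g, u_1, ..., u_n} with value ν(S) = 0 if g ∉ S and ν(S) = ρ(∑_{i : u_i ∈ S} w_i)² if g ∈ S, where w_i > 0 are fixed weights and ρ > 0. Let f_i = w_i / ∑_j w_j. Then the Shapley value of crowd member u_i equals φ_{u_i}(ν) = ρ·(w_i²/2 + (2/3)·∑_{j ≠ i} w_i w_j), i.e. φ_{u_i}(ν)/ν(N) = f_i²/2 + (2/3)f_i(1 - f_i) = (2/3)f_i - f_i²/6. -/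
/-!
The game is a sum of unanimity games:
`ρ (∑_{u_j ∈ S} w_j)² [g ∈ S] = ∑_{j,k} ρ w_j w_k [{g, u_j, u_k} ⊆ S]`.
The Shapley value is linear, and the unanimity game of a coalition `T` pays each member of `T`
exactly `1 / |T|` (a hockey-stick identity) and everybody else nothing. Hence `u_i` receives
`ρ w_i² / 2` from the pair `j = k = i` and `ρ w_i w_k / 3` from each of the two ordered pairs
`(i, k)`, `(k, i)` with `k ≠ i`, i.e. `ρ ((2/3) w_i ∑_j w_j - w_i² / 6)`.
-/

open Finset Filter Topology

open Nat in
theorem sum_choose_mul_factorial_mul_factorial (m r : ℕ) :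
    (∑ k ∈ range (m + 1), m.choose k * ((r + k)! * (m - k)!)) * (r + 1) = (m + r + 1)! := by
  have term : ∀ k ∈ range (m + 1),
      m.choose k * ((r + k)! * (m - k)!) = m ! * r ! * (k + r).choose r := by
    intro k hk
    rw [← choose_mul_factorial_mul_factorial (mem_range_succ_iff.mp hk), add_comm r k,
      ← add_choose_mul_factorial_mul_factorial k r]
    ring
  have h := add_choose_mul_factorial_mul_factorial m (r + 1)
  rw [factorial_succ, ← add_assoc] at h
  rw [sum_congr rfl term, ← mul_sum, sum_range_add_choose, ← h]
  ring

open Nat in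
theorem sum_choose_mul_shapley_weight (m r : ℕ) :
    ∑ k ∈ range (m + 1), m.choose k •
      ((r + k)! * (m + r + 1 - (r + k) - 1)! / (m + r + 1)! : ℝ) = 1 / (r + 1) := by
  have key : ((∑ k ∈ range (m + 1), m.choose k * ((r + k)! * (m - k)!) : ℕ) : ℝ) * (r + 1)
      = (m + r + 1)! := by exact_mod_cast sum_choose_mul_factorial_mul_factorial m r
  calc _ = ((∑ k ∈ range (m + 1), m.choose k * ((r + k)! * (m - k)!) : ℕ) : ℝ) / (m + r + 1)! := by
        push_cast
        rw [sum_div]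
        refine sum_congr rfl fun k hk => ?_
        rw [show m + r + 1 - (r + k) - 1 = m - k by grind, nsmul_eq_mul]
        ring
    _ = 1 / (r + 1) := by
        rw [div_eq_div_iff (by positivity) (by positivity), one_mul, key]

theorem sum_Icc_apply_card {α β : Type*} [DecidableEq α] [AddCommMonoid β] {s t : Finset α}
    (hst : s ⊆ t) (f : ℕ → β) :
    ∑ u ∈ Icc s t, f #u = ∑ k ∈ range (#t - #s + 1), (#t - #s).choose k • f (#s + k) := by
  have hdisj : ∀ u ∈ (t \ s).powerset, Disjoint s u :=
    fun u hu => disjoint_of_subset_right (mem_powerset.mp hu) disjoint_sdiff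
  rw [Icc_eq_image_powerset hst, sum_image, ← card_sdiff_of_subset hst]
  · simp_rw [← sum_powerset_apply_card (fun k => f (#s + k))]
    exact sum_congr rfl fun u hu => by rw [card_union_of_disjoint (hdisj u hu)]
  · intro u hu v hv (huv : s ∪ u = s ∪ v)
    rw [← union_sdiff_cancel_left (hdisj u hu), huv, union_sdiff_cancel_left (hdisj v hv)]

theorem shapley_sum {α ι : Type*} [DecidableEq α] (N : Finset α) (s : Finset ι)
    (c : ι → ℝ) (u : ι → Finset α → ℝ) (i : α) :
    shapley N (fun S => ∑ p ∈ s, c p * u p S) i = ∑ p ∈ s, c p * shapley N (u p) i := by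
  simp only [shapley, ← sum_sub_distrib, ← mul_sub, mul_sum]
  rw [sum_comm]
  exact sum_congr rfl fun _ _ => sum_congr rfl fun _ _ => by ring

theorem shapley_eq_zero_of_forall_insert {α : Type*} [DecidableEq α] {N : Finset α}
    {ν : Finset α → ℝ} {i : α} (h : ∀ S, ν (insert i S) = ν S) : shapley N ν i = 0 := by
  simp [shapley, h]

theorem shapley_unanimity_of_mem {α : Type*} [DecidableEq α] {N T : Finset α} {i : α}
    (hTN : T ⊆ N) (hi : i ∈ T) :
    shapley N (fun S => if T ⊆ S then 1 else 0) i = 1 / #T := by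
  have marginal : ∀ S ∈ (N.erase i).powerset,
      ((if T ⊆ insert i S then 1 else 0) - if T ⊆ S then 1 else 0 : ℝ) =
        if T.erase i ⊆ S then 1 else 0 := by
    intro S hS
    have hiS : i ∉ S := fun h => (mem_erase.mp (mem_powerset.mp hS h)).1 rfl
    simp only [subset_insert_iff, if_neg fun h : T ⊆ S => hiS (h hi), sub_zero]
  obtain ⟨r, hr⟩ : ∃ r, #T = r + 1 := ⟨#T - 1, by have := card_pos.mpr ⟨i, hi⟩; omega⟩
  obtain ⟨m, hm⟩ : ∃ m, #N = m + r + 1 := ⟨#N - #T, by have := card_le_card hTN; omega⟩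
  have hcard : #(N.erase i) - #(T.erase i) = m := by
    rw [card_erase_of_mem (hTN hi), card_erase_of_mem hi]; omega
  rw [shapley, sum_congr rfl fun S hS => by rw [marginal S hS, mul_ite, mul_one, mul_zero],
    ← sum_filter, ← Icc_eq_filter_powerset, hm, sum_Icc_apply_card (erase_subset_erase i hTN)
      (fun k => (k.factorial * (m + r + 1 - k - 1).factorial / (m + r + 1).factorial : ℝ)),
    hcard, card_erase_of_mem hi, hr, Nat.add_sub_cancel, sum_choose_mul_shapley_weight]
  push_cast
  ring

theorem shapley_unanimity {α : Type*} [DecidableEq α] {N T : Finset α} {i : α} (hTN : T ⊆ N) :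
    shapley N (fun S => if T ⊆ S then 1 else 0) i = if i ∈ T then (1 : ℝ) / #T else 0 := by
  split_ifs with hi
  · exact shapley_unanimity_of_mem hTN hi
  · exact shapley_eq_zero_of_forall_insert fun S => by simp only [subset_insert_iff_of_notMem hi]

theorem crowd_game_eq_sum_unanimity {n : ℕ} (ρ : ℝ) (w : Fin n → ℝ)
    (S : Finset (Option (Fin n))) :
    (if none ∈ S then ρ * (∑ i ∈ univ.filter (fun i : Fin n => some i ∈ S), w i) ^ 2 else 0) =
      ∑ p : Fin n × Fin n, ρ * (w p.1 * w p.2) *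
        if {none, some p.1, some p.2} ⊆ S then 1 else 0 := by
  split_ifs with hS
  · rw [sum_filter, sq, sum_mul_sum, Fintype.sum_prod_type, mul_sum]
    refine sum_congr rfl fun j _ => ?_
    rw [mul_sum]
    refine sum_congr rfl fun k _ => ?_
    simp only [insert_subset_iff, singleton_subset_iff, hS, true_and]
    split_ifs <;> simp_all
  · simp [insert_subset_iff, hS]

-- Written with indicators of `i = j` and `i = k` so that the double sum over `(j, k)` collapses.
theorem shapley_crowd_unanimity {n : ℕ} (i j k : Fin n) :
    shapley univ (fun S => if {none, some j, some k} ⊆ S then 1 else 0) (some i) =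
      (if i = j then 1 / 3 else 0) + (if i = k then 1 / 3 else 0) -
        if i = j ∧ i = k then 1 / 6 else 0 := by
  rw [shapley_unanimity (subset_univ _)]
  obtain rfl | hj := eq_or_ne i j
  · obtain rfl | hk := eq_or_ne i k
    · norm_num [card_pair (Option.some_ne_none i).symm]
    · simp [hk]
  · by_cases hjk : j = k <;> simp_all

theorem shapley_crowd_game {n : ℕ} (ρ : ℝ) (w : Fin n → ℝ) (ν : Finset (Option (Fin n)) → ℝ)
    (hν : ∀ S, ν S = if none ∈ S then
      ρ * (∑ i ∈ univ.filter (fun i : Fin n => some i ∈ S), w i) ^ 2 else 0)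
    (i : Fin n) :
    shapley univ ν (some i) = ρ * (2 / 3 * w i * ∑ j, w j - w i ^ 2 / 6) := by
  rw [show ν = _ from funext fun S => (hν S).trans (crowd_game_eq_sum_unanimity ρ w S),
    shapley_sum]
  simp only [shapley_crowd_unanimity, Fintype.sum_prod_type]
  simp only [ite_and, mul_sub, mul_add, mul_ite, mul_zero, sum_sub_distrib, sum_add_distrib,
    sum_ite_irrel, sum_const_zero, sum_ite_eq, mem_univ, if_true]
  simp only [mul_comm (w _) (w i), ← sum_mul, ← mul_sum]
  ring

theorem stmt_7 (n : ℕ) (ρ : ℝ) (hρ : 0 < ρ) (w : Fin n → ℝ) (hw : ∀ i, 0 < w i)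
    (ν : Finset (Option (Fin n)) → ℝ)
    (hν : ∀ S, ν S = if none ∈ S then
      ρ * (∑ i ∈ Finset.univ.filter (fun i : Fin n => some i ∈ S), w i) ^ 2 else 0)
    (i : Fin n) :
    shapley Finset.univ ν (some i) =
      ρ * ((w i) ^ 2 / 2 + (2 / 3) * ∑ j ∈ Finset.univ.erase i, w i * w j) ∧
    shapley Finset.univ ν (some i) / ν Finset.univ =
      (w i / ∑ j, w j) ^ 2 / 2 +
        (2 / 3) * (w i / ∑ j, w j) * (1 - w i / ∑ j, w j) ∧
    shapley Finset.univ ν (some i) / ν Finset.univ =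
      (2 / 3) * (w i / ∑ j, w j) - (w i / ∑ j, w j) ^ 2 / 6 := by
  have hφ := shapley_crowd_game ρ w ν hν i
  have hW : 0 < ∑ j, w j := sum_pos (fun j _ => hw j) ⟨i, mem_univ i⟩
  have hνN : ν univ = ρ * (∑ j, w j) ^ 2 := by simp [hν]
  have herase : ∑ j ∈ univ.erase i, w i * w j = w i * (∑ j, w j - w i) := by
    rw [← mul_sum, sum_erase_eq_sub (mem_univ i)]
  refine ⟨by rw [hφ, herase]; ring, ?_, ?_⟩
  · rw [hφ, hνN]
    field_simp
    ring
  · rw [hφ, hνN]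
    field_simp
end

section
/- In the weighted Metcalfe game on N = {g, u_1, ..., u_n} with ν(S) = 0 if g ∉ S and ν(S) = ρ(∑_{i : u_i ∈ S} w_i)² if g ∈ S, the founder's Shapley value satisfies φ_g(ν)/ν(N) = 1/3 + (1/6)∑_i f_i², where f_i = w_i / ∑_j w_j. In particular φ_g(ν)/ν(N) ≥ 1/3, with equality approached when the work shares f_i are dispersed. -/
/-!
A player's Shapley value is his expected marginal contribution to the set of players preceding
him in a uniformly random order. All users of a set `B` precede the founder `g` with probability
`1 / (|B| + 1)`, the chance that `g` comes last among `B ∪ {g}`. Since the marginal contribution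
of `g` to a set `T` of users is `ρ (∑_{i ∈ T} w_i)²`, expanding the square into
pairs gives `φ_g = ρ (∑_i w_i² / 2 + ∑_{i ≠ j} w_i w_j / 3) = ρ (W² / 3 + ∑_i w_i² / 6)`,
while `ν(N) = ρ W²` with `W = ∑_i w_i`.
-/

open Finset Filter Topology

open scoped Nat

theorem Nat.succ_mul_sum_choose_mul_add_factorial_mul_factorial (b k : ℕ) :
    (b + 1) * ∑ u ∈ range (k + 1), k.choose u * ((b + u)! * (k - u)!) = (b + k + 1)! := by
  have hterm : ∀ u ∈ range (k + 1),
      k.choose u * ((b + u)! * (k - u)!) = k ! * b ! * (u + b).choose b := by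
    intro u hu
    refine Nat.eq_of_mul_eq_mul_right u.factorial_pos ?_
    calc k.choose u * ((b + u)! * (k - u)!) * u !
        = (k.choose u * u ! * (k - u)!) * (b + u)! := by ring
      _ = k ! * ((u + b).choose b * u ! * b !) := by
          rw [Nat.choose_mul_factorial_mul_factorial (by simpa [Nat.lt_succ_iff] using hu),
            Nat.add_choose_mul_factorial_mul_factorial, add_comm u]
      _ = k ! * b ! * (u + b).choose b * u ! := by ring
  rw [sum_congr rfl hterm, ← mul_sum, Nat.sum_range_add_choose,
    show b + k + 1 = k + (b + 1) by ring, ← Nat.add_choose_mul_factorial_mul_factorial k (b + 1),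
    Nat.factorial_succ b, ← add_assoc]
  ring

/-- The probability that a given player of `m + 1` is preceded by exactly a given set of `s`
others in a uniformly random order. -/
noncomputable def shapleyCoeff (m s : ℕ) : ℝ := (s ! * (m - s)! : ℝ) / (m + 1)!

theorem Finset.sum_Icc_shapleyCoeff {α : Type*} [DecidableEq α] {A B : Finset α}
    (hBA : B ⊆ A) :
    ∑ T ∈ Icc B A, shapleyCoeff #A #T = 1 / (#B + 1) := by
  have hdisj : ∀ U ∈ (A \ B).powerset, Disjoint B U := fun U hU =>
    disjoint_of_subset_right (mem_powerset.1 hU) disjoint_sdiff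
  rw [Icc_eq_image_powerset hBA, sum_image fun U hU V hV hUV => by
    rw [← union_sdiff_cancel_left (hdisj U hU), ← union_sdiff_cancel_left (hdisj V hV)]
    exact congrArg (· \ B) hUV]
  rw [sum_congr rfl fun U hU => by rw [card_union_of_disjoint (hdisj U hU)],
    sum_powerset_apply_card (fun u => shapleyCoeff #A (#B + u)), card_sdiff_of_subset hBA]
  obtain ⟨k, hk⟩ : ∃ k, #A = #B + k := Nat.exists_eq_add_of_le (card_le_card hBA)
  have key := Nat.succ_mul_sum_choose_mul_add_factorial_mul_factorial #B k
  rw [hk, Nat.add_sub_cancel_left]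
  simp only [shapleyCoeff, Nat.add_sub_add_left, nsmul_eq_mul, mul_div_assoc', ← sum_div]
  rw [div_eq_div_iff (by positivity) (by positivity), one_mul, mul_comm]
  exact_mod_cast key

theorem shapley_eq_sum_shapleyCoeff {α : Type*} [DecidableEq α] {N : Finset α} {i : α}
    (hi : i ∈ N) (ν : Finset α → ℝ) :
    shapley N ν i = ∑ S ∈ (N.erase i).powerset,
      shapleyCoeff #(N.erase i) #S * (ν (insert i S) - ν S) := by
  have hN : #N = #(N.erase i) + 1 := (card_erase_add_one hi).symm
  refine sum_congr rfl fun S _ => ?_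
  rw [shapleyCoeff, hN, show #(N.erase i) + 1 - #S - 1 = #(N.erase i) - #S by omega]

theorem shapley_univ_none {β : Type*} [Fintype β] [DecidableEq β]
    (ν : Finset (Option β) → ℝ) :
    shapley univ ν none = ∑ T ∈ (univ : Finset β).powerset, shapleyCoeff (Fintype.card β) #T *
      (ν (insert none (T.image some)) - ν (T.image some)) := by
  have herase : (univ : Finset (Option β)).erase none = univ.image some := by
    ext (_ | _) <;> simp
  rw [shapley_eq_sum_shapleyCoeff (mem_univ none), herase, powerset_image,
    sum_image (image_injective (Option.some_injective β)).injOn]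
  simp only [card_image_of_injective _ (Option.some_injective β), card_univ]

theorem Finset.sum_powerset_mul_sq_sum {α : Type*} [DecidableEq α] (A : Finset α)
    (p : Finset α → ℝ) (w : α → ℝ) :
    ∑ T ∈ A.powerset, p T * (∑ i ∈ T, w i) ^ 2 =
      ∑ i ∈ A, ∑ j ∈ A, w i * w j * ∑ T ∈ Icc {i, j} A, p T := by
  have hsq : ∀ T ∈ A.powerset, p T * (∑ i ∈ T, w i) ^ 2 =
      ∑ i ∈ A, ∑ j ∈ A, if {i, j} ⊆ T then w i * w j * p T else 0 := by
    intro T hT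
    have hsum : ∀ f : α → ℝ, ∑ i ∈ T, f i = ∑ i ∈ A, if i ∈ T then f i else 0 := fun f => by
      rw [sum_ite_mem, inter_eq_right.2 (mem_powerset.1 hT)]
    rw [sq, sum_mul_sum, mul_sum, hsum]
    refine sum_congr rfl fun i _ => ?_
    rw [mul_sum, hsum]
    by_cases hi : i ∈ T
    · simp only [hi, if_true, insert_subset_iff, singleton_subset_iff, true_and]
      exact sum_congr rfl fun j _ => by rw [mul_comm]
    · simp [hi, insert_subset_iff]
  rw [sum_congr rfl hsq, sum_comm]
  refine sum_congr rfl fun i _ => ?_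
  rw [sum_comm]
  refine sum_congr rfl fun j _ => ?_
  rw [Icc_eq_filter_powerset, sum_filter, mul_sum]
  exact sum_congr rfl fun T _ => by split_ifs <;> simp

theorem Finset.sum_sum_mul_div_card_pair {α : Type*} [DecidableEq α] (A : Finset α)
    (w : α → ℝ) :
    ∑ i ∈ A, ∑ j ∈ A, w i * w j * (1 / (#{i, j} + 1)) =
      (∑ i ∈ A, w i) ^ 2 / 3 + (∑ i ∈ A, w i ^ 2) / 6 := by
  have hterm : ∀ i j : α, w i * w j * (1 / (#{i, j} + 1)) =
      w i * w j / 3 + if i = j then w i * w j / 6 else 0 := by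
    intro i j
    rcases eq_or_ne i j with rfl | hij
    · rw [pair_eq_singleton, card_singleton, if_pos rfl]
      ring
    · rw [card_pair hij, if_neg hij]
      ring
  rw [sum_congr rfl fun i _ => sum_congr rfl fun j _ => hterm i j]
  simp only [sum_add_distrib, sum_ite_eq, ← sum_div, ← mul_sum, ← sum_mul, sq]
  rw [sum_ite_of_true fun _ h => h, sum_div]

theorem stmt_8 (n : ℕ) (hn : 1 ≤ n) (ρ : ℝ) (hρ : 0 < ρ) (w : Fin n → ℝ)
    (hw : ∀ i, 0 < w i)
    (ν : Finset (Option (Fin n)) → ℝ)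
    (hν : ∀ S, ν S = if none ∈ S then
      ρ * (∑ i ∈ Finset.univ.filter (fun i : Fin n => some i ∈ S), w i) ^ 2 else 0) :
    shapley Finset.univ ν none / ν Finset.univ =
      1 / 3 + (1 / 6) * ∑ i, (w i / ∑ j, w j) ^ 2 ∧
    shapley Finset.univ ν none / ν Finset.univ ≥ 1 / 3 := by
  have hW : 0 < ∑ j, w j := sum_pos (fun i _ => hw i) ⟨⟨0, hn⟩, mem_univ _⟩
  have hmarginal : ∀ T : Finset (Fin n),
      ν (insert none (T.image some)) - ν (T.image some) = ρ * (∑ i ∈ T, w i) ^ 2 := by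
    intro T
    rw [hν, hν, if_pos (mem_insert_self _ _), if_neg (by simp), sub_zero]
    congr 3
    ext
    simp
  have hshapley : shapley univ ν none = ρ * ((∑ i, w i) ^ 2 / 3 + (∑ i, w i ^ 2) / 6) := by
    rw [shapley_univ_none, ← card_univ]
    simp only [hmarginal, mul_left_comm _ ρ, ← mul_sum, sum_powerset_mul_sq_sum]
    rw [← sum_sum_mul_div_card_pair]
    simp only [sum_Icc_shapleyCoeff (subset_univ _)]
  have hgrand : ν univ = ρ * (∑ i, w i) ^ 2 := by
    rw [hν, if_pos (mem_univ _)]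
    simp
  have hratio :
      shapley univ ν none / ν univ = 1 / 3 + (1 / 6) * ∑ i, (w i / ∑ j, w j) ^ 2 := by
    rw [hshapley, hgrand]
    simp only [div_pow, ← sum_div]
    field_simp
  refine ⟨hratio, ?_⟩
  rw [hratio]
  linarith [sum_nonneg fun i (_ : i ∈ univ) => sq_nonneg (w i / ∑ j, w j)]
end

section
/- Let m ≥ 1 and let n_1, ..., n_m be positive reals, ρ > 0. Consider the game on N = {g, 1, ..., m} with ξ(S) = 0 if g ∉ S and ξ(S) = ρ·(∑_{i ∈ S \ {g}} n_i)² if g ∈ S. Then the Shapley values are φ_i(ξ) = ρ(n_i²/2 + (2/3)∑_{j≠i} n_i n_j) for each agent i, and φ_g(ξ) = ξ(N) − ∑_i φ_i(ξ). -/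
open Finset Filter Topology

/-- The Shapley weight in a game with `m + 1` players. -/
noncomputable def shw (m s : ℕ) : ℝ :=
  ((s.factorial : ℝ) * ((m - s).factorial : ℝ)) / ((m + 1).factorial : ℝ)

lemma gauss2 (p : ℕ) : ∑ t ∈ Finset.range p, ((t : ℝ) + 1) = p * (p + 1) / 2 := by
  induction p with
  | zero => simp
  | succ n ih => rw [Finset.sum_range_succ, ih]; push_cast; ring

lemma gauss3 (p : ℕ) :
    ∑ t ∈ Finset.range p, (((t : ℝ) + 1) * ((t : ℝ) + 2)) = p * (p + 1) * (p + 2) / 3 := by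
  induction p with
  | zero => simp
  | succ n ih => rw [Finset.sum_range_succ, ih]; push_cast; ring

lemma L1 (p : ℕ) :
    ∑ t ∈ Finset.range (p + 1), (p.choose t) • shw (p + 1) (t + 1) = 1 / 2 := by
  have hstep : ∀ t ∈ Finset.range (p + 1),
      (p.choose t) • shw (p + 1) (t + 1)
        = ((t : ℝ) + 1) * ((p.factorial : ℝ) / ((p + 2).factorial : ℝ)) := by
    intro t ht
    have htp : t ≤ p := Nat.lt_succ_iff.mp (Finset.mem_range.mp ht)
    have hsub : p + 1 - (t + 1) = p - t := by omega
    have h2 : p.choose t * ((t + 1).factorial * (p - t).factorial)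
        = (t + 1) * p.factorial := by
      rw [Nat.factorial_succ]
      calc p.choose t * ((t + 1) * t.factorial * (p - t).factorial)
          = (t + 1) * (p.choose t * t.factorial * (p - t).factorial) := by ring
        _ = (t + 1) * p.factorial := by rw [Nat.choose_mul_factorial_mul_factorial htp]
    rw [nsmul_eq_mul, shw, hsub, mul_div_assoc', mul_div_assoc']
    congr 1
    exact_mod_cast h2
  rw [Finset.sum_congr rfl hstep, ← Finset.sum_mul]
  have hg : ∑ t ∈ Finset.range (p + 1), ((t : ℝ) + 1)
      = ((p : ℝ) + 1) * ((p : ℝ) + 2) / 2 := by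
    rw [gauss2 (p + 1)]; push_cast; ring
  rw [hg]
  have hfac : ((p + 2).factorial : ℝ) = ((p : ℝ) + 2) * (((p : ℝ) + 1) * (p.factorial : ℝ)) := by
    rw [show p + 2 = (p + 1) + 1 from rfl, Nat.factorial_succ, Nat.factorial_succ]
    push_cast; ring
  rw [hfac]
  have h0 : (p.factorial : ℝ) ≠ 0 := Nat.cast_ne_zero.mpr p.factorial_ne_zero
  have h1 : ((p : ℝ) + 1) ≠ 0 := by positivity
  have h2 : ((p : ℝ) + 2) ≠ 0 := by positivity
  field_simp

lemma L2 (p : ℕ) :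
    ∑ t ∈ Finset.range (p + 1), (p.choose t) • shw (p + 2) (t + 2) = 1 / 3 := by
  have hstep : ∀ t ∈ Finset.range (p + 1),
      (p.choose t) • shw (p + 2) (t + 2)
        = (((t : ℝ) + 1) * ((t : ℝ) + 2)) * ((p.factorial : ℝ) / ((p + 3).factorial : ℝ)) := by
    intro t ht
    have htp : t ≤ p := Nat.lt_succ_iff.mp (Finset.mem_range.mp ht)
    have hsub : p + 2 - (t + 2) = p - t := by omega
    have h2 : p.choose t * ((t + 2).factorial * (p - t).factorial)
        = (t + 1) * (t + 2) * p.factorial := by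
      rw [show t + 2 = (t + 1) + 1 from rfl, Nat.factorial_succ, Nat.factorial_succ]
      calc p.choose t * ((t + 1 + 1) * ((t + 1) * t.factorial) * (p - t).factorial)
          = (t + 1) * (t + 1 + 1) * (p.choose t * t.factorial * (p - t).factorial) := by ring
        _ = (t + 1) * (t + 2) * p.factorial := by
            rw [Nat.choose_mul_factorial_mul_factorial htp]
    rw [nsmul_eq_mul, shw, hsub]
    rw [show p + 2 + 1 = p + 3 from rfl, mul_div_assoc', mul_div_assoc']
    congr 1
    have := congrArg (Nat.cast (R := ℝ)) h2
    push_cast at this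
    push_cast
    linarith [this]
  rw [Finset.sum_congr rfl hstep, ← Finset.sum_mul]
  have hg : ∑ t ∈ Finset.range (p + 1), (((t : ℝ) + 1) * ((t : ℝ) + 2))
      = ((p : ℝ) + 1) * ((p : ℝ) + 2) * ((p : ℝ) + 3) / 3 := by
    rw [gauss3 (p + 1)]; push_cast; ring
  rw [hg]
  have hfac : ((p + 3).factorial : ℝ)
      = ((p : ℝ) + 3) * (((p : ℝ) + 2) * (((p : ℝ) + 1) * (p.factorial : ℝ))) := by
    rw [show p + 3 = ((p + 1) + 1) + 1 from rfl, Nat.factorial_succ, Nat.factorial_succ,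
      Nat.factorial_succ]
    push_cast; ring
  rw [hfac]
  have h0 : (p.factorial : ℝ) ≠ 0 := Nat.cast_ne_zero.mpr p.factorial_ne_zero
  have h1 : ((p : ℝ) + 1) ≠ 0 := by positivity
  have h2 : ((p : ℝ) + 2) ≠ 0 := by positivity
  have h3 : ((p : ℝ) + 3) ≠ 0 := by positivity
  field_simp

/-- Summing over the powerset of `insert a M`. -/
lemma sum_powerset_insert' {α β : Type*} [DecidableEq α] [AddCommMonoid β]
    {M : Finset α} {a : α} (ha : a ∉ M) (f : Finset α → β) :
    ∑ S ∈ (insert a M).powerset, f S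
      = ∑ S ∈ M.powerset, f S + ∑ S ∈ M.powerset, f (insert a S) := by
  rw [Finset.powerset_insert, Finset.sum_union, Finset.sum_image]
  · intro V hV V' hV' h
    have haV : a ∉ V := fun h' => ha (Finset.mem_powerset.mp hV h')
    have haV' : a ∉ V' := fun h' => ha (Finset.mem_powerset.mp hV' h')
    rw [← Finset.erase_insert haV, ← Finset.erase_insert haV', h]
  · rw [Finset.disjoint_left]
    intro S hS hS'
    obtain ⟨V, hV, rfl⟩ := Finset.mem_image.mp hS'
    exact ha (Finset.mem_powerset.mp hS (Finset.mem_insert_self a V))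

lemma aux_insert_sum {α β : Type*} [DecidableEq α] [AddCommMonoid β]
    {M : Finset α} {j : α} (hj : j ∈ M) (g : Finset α → β) :
    ∑ U ∈ M.powerset, (if j ∈ U then g U else 0)
      = ∑ V ∈ (M.erase j).powerset, g (insert j V) := by
  conv_lhs => rw [← Finset.insert_erase hj]
  rw [sum_powerset_insert' (Finset.notMem_erase j M)]
  have h1 : ∑ S ∈ (M.erase j).powerset, (if j ∈ S then g S else 0) = 0 := by
    apply Finset.sum_eq_zero
    intro S hS
    have : j ∉ S := fun h => Finset.notMem_erase j M (Finset.mem_powerset.mp hS h)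
    simp [this]
  rw [h1, zero_add]
  apply Finset.sum_congr rfl
  intro S _
  simp

lemma aux_swap {α β : Type*} [DecidableEq α] [AddCommMonoid β]
    (M : Finset α) (G : α → Finset α → β) :
    ∑ U ∈ M.powerset, ∑ j ∈ U, G j U
      = ∑ j ∈ M, ∑ V ∈ (M.erase j).powerset, G j (insert j V) := by
  have h1 : ∀ U ∈ M.powerset, ∑ j ∈ U, G j U
      = ∑ j ∈ M, (if j ∈ U then G j U else 0) := by
    intro U hU
    rw [Finset.sum_ite_mem, Finset.inter_eq_right.mpr (Finset.mem_powerset.mp hU)]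
  rw [Finset.sum_congr rfl h1, Finset.sum_comm]
  exact Finset.sum_congr rfl fun j hj => aux_insert_sum hj (G j)

lemma aux_image {α β γ : Type*} [DecidableEq α] [DecidableEq β] [AddCommMonoid γ]
    {f : α → β} (hf : Function.Injective f) (s : Finset α) (g : Finset β → γ) :
    ∑ T ∈ (s.image f).powerset, g T = ∑ U ∈ s.powerset, g (U.image f) := by
  have hps : (s.image f).powerset = s.powerset.image (Finset.image f) := by
    ext T
    simp only [Finset.mem_powerset, Finset.mem_image]
    constructor
    · intro hT
      obtain ⟨U, hU, rfl⟩ := Finset.subset_image_iff.mp hT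
      exact ⟨U, hU, rfl⟩
    · rintro ⟨U, hU, rfl⟩
      exact Finset.image_subset_image hU
  rw [hps, Finset.sum_image]
  intro U _ V _ h
  exact Finset.image_injective hf h

lemma key1 {α : Type*} [DecidableEq α] {m : ℕ} (M' : Finset α) (hc : M'.card + 1 = m) :
    ∑ V ∈ M'.powerset, shw m (V.card + 1) = 1 / 2 := by
  obtain ⟨p, rfl⟩ : ∃ p, m = p + 1 := ⟨M'.card, by omega⟩
  rw [Finset.sum_powerset_apply_card (fun t => shw (p + 1) (t + 1)),
    show M'.card = p by omega]
  exact L1 p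

lemma key2 {α : Type*} [DecidableEq α] {m : ℕ} (M' : Finset α) (hc : M'.card + 2 = m) :
    ∑ V ∈ M'.powerset, shw m (V.card + 2) = 1 / 3 := by
  obtain ⟨p, rfl⟩ : ∃ p, m = p + 2 := ⟨M'.card, by omega⟩
  rw [Finset.sum_powerset_apply_card (fun t => shw (p + 2) (t + 2)),
    show M'.card = p by omega]
  exact L2 p

lemma keyB {α : Type*} [DecidableEq α] {m : ℕ} (nv : α → ℝ) (M' : Finset α)
    (hc : M'.card + 1 = m) :
    ∑ V ∈ M'.powerset, shw m (V.card + 1) * (∑ k ∈ V, nv k)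
      = (1 / 3) * ∑ k ∈ M', nv k := by
  have h1 : ∀ V ∈ M'.powerset, shw m (V.card + 1) * (∑ k ∈ V, nv k)
      = ∑ k ∈ V, shw m (V.card + 1) * nv k := fun V _ => Finset.mul_sum _ _ _
  rw [Finset.sum_congr rfl h1,
    aux_swap M' (fun k V => shw m (V.card + 1) * nv k), Finset.mul_sum]
  apply Finset.sum_congr rfl
  intro k hk
  have hkM : 1 ≤ M'.card := Finset.card_pos.mpr ⟨k, hk⟩
  have hkc : (M'.erase k).card + 2 = m := by
    rw [Finset.card_erase_of_mem hk]; omega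
  have h2 : ∀ V ∈ (M'.erase k).powerset,
      shw m ((insert k V).card + 1) * nv k = shw m (V.card + 2) * nv k := by
    intro V hV
    have hkV : k ∉ V := fun h =>
      Finset.notMem_erase k M' (Finset.mem_powerset.mp hV h)
    rw [Finset.card_insert_of_notMem hkV]
  rw [Finset.sum_congr rfl h2, ← Finset.sum_mul, key2 (M'.erase k) hkc]

theorem stmt_18 (m : ℕ) (hm : 1 ≤ m) (nv : Fin m → ℝ) (hnv : ∀ i, 0 < nv i)
    (ρ : ℝ) (hρ : 0 < ρ)
    (ξ : Finset (Option (Fin m)) → ℝ)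
    (hξ : ∀ S, ξ S = if none ∈ S then
      ρ * (∑ i ∈ Finset.univ.filter (fun i : Fin m => some i ∈ S), nv i) ^ 2 else 0) :
    (∀ i : Fin m, shapley Finset.univ ξ (some i) =
      ρ * ((nv i) ^ 2 / 2 + (2 / 3) * ∑ j ∈ Finset.univ.erase i, nv i * nv j)) ∧
    shapley Finset.univ ξ none =
      ξ Finset.univ - ∑ i : Fin m, shapley Finset.univ ξ (some i) := by
  have hNcard : (Finset.univ : Finset (Option (Fin m))).card = m + 1 := by
    simp [Finset.card_univ]
  have hcoef : ∀ S : Finset (Option (Fin m)),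
      (((S.card.factorial : ℝ) *
        (((Finset.univ : Finset (Option (Fin m))).card - S.card - 1).factorial : ℝ)) /
        (((Finset.univ : Finset (Option (Fin m))).card.factorial : ℝ)))
        = shw m S.card := by
    intro S
    rw [hNcard, shw]
    have h : m + 1 - S.card - 1 = m - S.card := by omega
    rw [h]
  -- part 1
  have part1 : ∀ i : Fin m, shapley Finset.univ ξ (some i) =
      ρ * ((nv i) ^ 2 / 2 + (2 / 3) * ∑ j ∈ Finset.univ.erase i, nv i * nv j) := by
    intro i
    rw [shapley]
    have hE : (Finset.univ : Finset (Option (Fin m))).erase (some i)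
        = insert none ((Finset.univ.erase i).image some) := by
      ext o
      cases o <;> simp
    have hnone : (none : Option (Fin m)) ∉ (Finset.univ.erase i).image some := by simp
    rw [hE, sum_powerset_insert' hnone]
    have hzero : ∑ S ∈ ((Finset.univ.erase i).image some).powerset,
        (((S.card.factorial : ℝ) *
          (((Finset.univ : Finset (Option (Fin m))).card - S.card - 1).factorial : ℝ)) /
          (((Finset.univ : Finset (Option (Fin m))).card.factorial : ℝ))) *
          (ξ (insert (some i) S) - ξ S) = 0 := by
      apply Finset.sum_eq_zero
      intro S hS
      have h1 : (none : Option (Fin m)) ∉ S := fun h =>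
        hnone (Finset.mem_powerset.mp hS h)
      have h2 : (none : Option (Fin m)) ∉ insert (some i) S := by
        simp [h1]
      rw [hξ S, hξ (insert (some i) S), if_neg h1, if_neg h2]
      simp
    rw [hzero, zero_add,
      aux_image (Option.some_injective (Fin m)) (Finset.univ.erase i)]
    have hterm : ∀ U ∈ (Finset.univ.erase i).powerset,
        (((((insert none (U.image some)).card).factorial : ℝ) *
          (((Finset.univ : Finset (Option (Fin m))).card -
            (insert none (U.image some)).card - 1).factorial : ℝ)) /
          (((Finset.univ : Finset (Option (Fin m))).card.factorial : ℝ))) *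
          (ξ (insert (some i) (insert none (U.image some)))
            - ξ (insert none (U.image some)))
        = ρ * nv i ^ 2 * shw m (U.card + 1)
          + 2 * ρ * nv i * (shw m (U.card + 1) * (∑ k ∈ U, nv k)) := by
      intro U hU
      have hiU : i ∉ U := fun h =>
        Finset.notMem_erase i Finset.univ (Finset.mem_powerset.mp hU h)
      have hcard : (insert none (U.image some)).card = U.card + 1 := by
        rw [Finset.card_insert_of_notMem (by simp),
          Finset.card_image_of_injective U (Option.some_injective (Fin m))]
      have hf1 : Finset.univ.filter
          (fun j : Fin m => some j ∈ insert none (U.image some)) = U := by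
        ext j; simp
      have hf2 : Finset.univ.filter
          (fun j : Fin m => some j ∈ insert (some i) (insert none (U.image some)))
          = insert i U := by
        ext j; simp
      rw [hcoef, hcard, hξ, hξ, if_pos (by simp), if_pos (by simp), hf1, hf2,
        Finset.sum_insert hiU]
      ring
    rw [Finset.sum_congr rfl hterm, Finset.sum_add_distrib, ← Finset.mul_sum,
      ← Finset.mul_sum]
    have huc : (Finset.univ.erase i).card + 1 = m := by
      rw [Finset.card_erase_of_mem (Finset.mem_univ i), Finset.card_univ,
        Fintype.card_fin]
      omega
    rw [key1 _ huc, keyB nv _ huc, ← Finset.mul_sum]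
    ring
  refine ⟨part1, ?_⟩
  -- part 2
  rw [shapley]
  have hE0 : (Finset.univ : Finset (Option (Fin m))).erase none
      = (Finset.univ : Finset (Fin m)).image some := by
    ext o
    cases o <;> simp
  rw [hE0, aux_image (Option.some_injective (Fin m)) Finset.univ]
  have hterm : ∀ U ∈ (Finset.univ : Finset (Fin m)).powerset,
      ((((U.image some).card.factorial : ℝ) *
        (((Finset.univ : Finset (Option (Fin m))).card -
          (U.image some).card - 1).factorial : ℝ)) /
        (((Finset.univ : Finset (Option (Fin m))).card.factorial : ℝ))) *
        (ξ (insert none (U.image some)) - ξ (U.image some))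
      = ∑ j ∈ U, shw m U.card * ρ * nv j * (∑ k ∈ U, nv k) := by
    intro U _
    have hcard : (U.image some).card = U.card :=
      Finset.card_image_of_injective U (Option.some_injective (Fin m))
    have hf1 : Finset.univ.filter
        (fun j : Fin m => some j ∈ insert none (U.image some)) = U := by
      ext j; simp
    have hnone2 : (none : Option (Fin m)) ∉ U.image some := by simp
    rw [hcoef, hcard, hξ, hξ, if_pos (by simp), if_neg hnone2, hf1]
    calc shw m U.card * (ρ * (∑ k ∈ U, nv k) ^ 2 - 0)
        = ∑ j ∈ U, nv j * (shw m U.card * ρ * (∑ k ∈ U, nv k)) := by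
          rw [← Finset.sum_mul]; ring
      _ = ∑ j ∈ U, shw m U.card * ρ * nv j * (∑ k ∈ U, nv k) := by
          apply Finset.sum_congr rfl; intros; ring
  rw [Finset.sum_congr rfl hterm,
    aux_swap Finset.univ (fun j V => shw m V.card * ρ * nv j * (∑ k ∈ V, nv k))]
  have hinner : ∀ j ∈ (Finset.univ : Finset (Fin m)),
      ∑ V ∈ (Finset.univ.erase j).powerset,
        shw m (insert j V).card * ρ * nv j * (∑ k ∈ insert j V, nv k)
      = ρ * nv j ^ 2 * (1 / 2) + ρ * nv j * ((1 / 3) * ∑ k ∈ Finset.univ.erase j, nv k) := by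
    intro j _
    have huc : (Finset.univ.erase j).card + 1 = m := by
      rw [Finset.card_erase_of_mem (Finset.mem_univ j), Finset.card_univ,
        Fintype.card_fin]
      omega
    have h2 : ∀ V ∈ (Finset.univ.erase j).powerset,
        shw m (insert j V).card * ρ * nv j * (∑ k ∈ insert j V, nv k)
        = ρ * nv j ^ 2 * shw m (V.card + 1)
          + ρ * nv j * (shw m (V.card + 1) * (∑ k ∈ V, nv k)) := by
      intro V hV
      have hjV : j ∉ V := fun h =>
        Finset.notMem_erase j Finset.univ (Finset.mem_powerset.mp hV h)
      rw [Finset.card_insert_of_notMem hjV, Finset.sum_insert hjV]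
      ring
    rw [Finset.sum_congr rfl h2, Finset.sum_add_distrib, ← Finset.mul_sum,
      ← Finset.mul_sum, key1 _ huc, keyB nv _ huc]
  rw [Finset.sum_congr rfl hinner]
  -- compute the right-hand side
  have hxiu : ξ Finset.univ = ρ * (∑ i : Fin m, nv i) ^ 2 := by
    rw [hξ, if_pos (Finset.mem_univ none)]
    congr 1
    rw [Finset.filter_true_of_mem (fun j _ => Finset.mem_univ (some j))]
  rw [hxiu, Finset.sum_congr rfl (fun i _ => part1 i)]
  have hsq : ρ * (∑ i : Fin m, nv i) ^ 2
      = ∑ j : Fin m, ρ * nv j * (∑ k : Fin m, nv k) := by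
    rw [sq, Finset.sum_mul, Finset.mul_sum]
    apply Finset.sum_congr rfl
    intros; ring
  rw [hsq, ← Finset.sum_sub_distrib]
  apply Finset.sum_congr rfl
  intro j _
  have hS : ∑ k : Fin m, nv k = nv j + ∑ k ∈ Finset.univ.erase j, nv k :=
    (Finset.add_sum_erase Finset.univ nv (Finset.mem_univ j)).symm
  rw [hS, ← Finset.mul_sum]
  ring
end
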